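/- Let G be a group with a left-order <. For g ∈ G define |g| to be the greater of g and g⁻¹. Let a, b, c, d be non-identity elements of G such that ab = ba, bc = cb, bd = db, (a³)⁻¹ c a³ = c⁻¹, (a³)⁻¹ d a³ = d⁻¹, and |a| < |b|. Then |c^d · c^{da} · c^{da²} · c^{da³} · c^{da⁴} · c^{da⁵}| < |b¹²|, where x^y denotes y⁻¹xy. -/

import Mathlib

/-!
All elements involved commute with `β = |b|`; among such elements multiplication by powers
of `β` is monotone on both sides, so bounds of the form `x < β ^ n` add up under products.
Each factor `u = c^{d aᵏ}` is inverted by `w = (a³)^{d aᵏ}`, whose square is `a⁶` because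
`a³` inverts `d`. Then `(u³ w)² = w² = a⁶`, so `u³ w < β³` and `w⁻¹ < β³`, whence
`u³ = (u³ w) w⁻¹ < β⁶` and `u < β²`; likewise `u⁻¹ < β²`. Six factors give `β¹²`.
-/

section Monoid

variable {M : Type*} [Monoid M] [PartialOrder M] [MulLeftStrictMono M] {a b c d : M}

theorem Commute.mul_le_mul' (had : Commute a d) (hbd : Commute b d) (hab : a ≤ b)
    (hcd : c ≤ d) : a * c ≤ b * d := by
  have := mulLeftMono_of_mulLeftStrictMono M
  calc a * c ≤ a * d := mul_le_mul_right hcd a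
    _ = d * a := had.eq
    _ ≤ d * b := mul_le_mul_right hab d
    _ = b * d := hbd.eq.symm

theorem Commute.mul_lt_mul_of_le_of_lt (had : Commute a d) (hbd : Commute b d) (hab : a ≤ b)
    (hcd : c < d) : a * c < b * d := by
  have := mulLeftMono_of_mulLeftStrictMono M
  calc a * c < a * d := mul_lt_mul_right hcd a
    _ = d * a := had.eq
    _ ≤ d * b := mul_le_mul_right hab d
    _ = b * d := hbd.eq.symm

theorem Commute.pow_le_pow_left (h : Commute a b) (hab : a ≤ b) : ∀ n : ℕ, a ^ n ≤ b ^ n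
  | 0 => by simp
  | n + 1 => by
    rw [pow_succ, pow_succ]
    exact (h.pow_left n).mul_le_mul' (Commute.pow_self b n) (h.pow_le_pow_left hab n) hab

theorem Commute.pow_lt_pow_left (h : Commute a b) (hab : a < b) {n : ℕ} (hn : n ≠ 0) :
    a ^ n < b ^ n := by
  obtain ⟨n, rfl⟩ := Nat.exists_eq_succ_of_ne_zero hn
  rw [pow_succ, pow_succ]
  exact (h.pow_left n).mul_lt_mul_of_le_of_lt (Commute.pow_self b n)
    (h.pow_le_pow_left hab.le n) hab

theorem List.prod_lt_pow_length {l : List M} (hl : l ≠ []) (hcomm : ∀ x ∈ l, Commute x b)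
    (hlt : ∀ x ∈ l, x < b) : l.prod < b ^ l.length := by
  induction l with
  | nil => exact absurd rfl hl
  | cons x l ih =>
    rw [List.prod_cons, List.length_cons, pow_succ']
    rcases eq_or_ne l [] with rfl | hne
    · simpa using hlt x (by simp)
    · have hx : Commute x b := hcomm x (by simp)
      exact (hx.pow_right l.length).mul_lt_mul_of_le_of_lt (Commute.self_pow b _)
        (hlt x (by simp)).le
        (ih hne (fun y hy ↦ hcomm y (by simp [hy])) (fun y hy ↦ hlt y (by simp [hy])))

end Monoid

theorem Commute.lt_of_pow_lt_pow_left {M : Type*} [Monoid M] [LinearOrder M]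
    [MulLeftStrictMono M] {a b : M} (h : Commute a b) (n : ℕ) (hab : a ^ n < b ^ n) : a < b :=
  lt_of_not_ge fun hba ↦ (h.symm.pow_le_pow_left hba n).not_gt hab

section Group

variable {G : Type*} [Group G]

theorem semiconjBy_inv_of_conj_eq_inv {t x : G} (h : t⁻¹ * x * t = x⁻¹) :
    SemiconjBy t x x⁻¹ := by
  rw [← SemiconjBy.inv_right_iff, inv_inv, SemiconjBy, ← h]
  group

theorem SemiconjBy.commute_sq {t x : G} (h : SemiconjBy t x x⁻¹) : Commute (t ^ 2) x := by
  rw [sq]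
  exact (inv_inv x ▸ h.inv_right).mul_left h

theorem SemiconjBy.conj {t x y g : G} (h : SemiconjBy t x y) :
    SemiconjBy (g⁻¹ * t * g) (g⁻¹ * x * g) (g⁻¹ * y * g) :=
  calc g⁻¹ * t * g * (g⁻¹ * x * g) = g⁻¹ * (t * x) * g := by group
    _ = g⁻¹ * (y * t) * g := by rw [h.eq]
    _ = g⁻¹ * y * g * (g⁻¹ * t * g) := by group

section LinearOrder

variable [LinearOrder G]

theorem Commute.max_inv_right {x b : G} (h : Commute x b) : Commute x (max b b⁻¹) := by
  rcases max_choice b b⁻¹ with hb | hb <;> rw [hb]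
  exacts [h, h.inv_right]

theorem max_inv_pow_le (b : G) (n : ℕ) : max b b⁻¹ ^ n ≤ max (b ^ n) (b ^ n)⁻¹ := by
  rcases max_choice b b⁻¹ with hb | hb <;> rw [hb]
  exacts [le_max_left _ _, (inv_pow b n).symm ▸ le_max_right _ _]

variable [MulLeftStrictMono G]

theorem List.max_prod_inv_lt_pow_length {l : List G} {b : G} (hl : l ≠ [])
    (hcomm : ∀ x ∈ l, Commute x b) (hlt : ∀ x ∈ l, max x x⁻¹ < b) :
    max l.prod l.prod⁻¹ < b ^ l.length := by
  refine max_lt (l.prod_lt_pow_length hl hcomm fun x hx ↦ (max_lt_iff.mp (hlt x hx)).1) ?_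
  rw [List.prod_inv_reverse, ← List.length_map (·⁻¹), ← List.length_reverse]
  refine List.prod_lt_pow_length (by simpa using hl) ?_ ?_ <;>
    simp only [List.mem_reverse, List.forall_mem_map]
  exacts [fun x hx ↦ (hcomm x hx).inv_left, fun x hx ↦ (max_lt_iff.mp (hlt x hx)).2]

theorem SemiconjBy.lt_sq_of_sq_lt {v w z : G} (h : SemiconjBy w v v⁻¹) (hv : Commute v z)
    (hw : Commute w z) (hw₁ : w ^ 2 < z ^ 2) (hw₂ : w⁻¹ ^ 2 < z ^ 2) : v < z ^ 2 := by
  have hvw : (v * w) ^ 2 = w ^ 2 := by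
    rw [sq, sq, mul_assoc, ← mul_assoc w, h.eq]
    group
  have hvw_lt : v * w < z := (hv.mul_left hw).lt_of_pow_lt_pow_left 2 (hvw ▸ hw₁)
  have hw_inv_lt : w⁻¹ < z := hw.inv_left.lt_of_pow_lt_pow_left 2 hw₂
  calc v = v * w * w⁻¹ := by group
    _ < z * z := (hv.mul_left hw).mul_lt_mul_of_le_of_lt (Commute.refl z) hvw_lt.le hw_inv_lt
    _ = z ^ 2 := (sq z).symm

theorem conj_lt_sq {a c x β : G} {n : ℕ} (hn : n ≠ 0) (hca : SemiconjBy (a ^ n) c c⁻¹)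
    (hax : Commute ((a ^ n) ^ 2) x) (haβ : Commute a β) (hcβ : Commute c β)
    (hxβ : Commute x β) (ha : max a a⁻¹ < β) : x⁻¹ * c * x < β ^ 2 := by
  have hw_sq : (x⁻¹ * a ^ n * x) ^ 2 = a ^ (n * 2) := by
    rw [show (x⁻¹ * a ^ n * x) ^ 2 = x⁻¹ * (a ^ n) ^ 2 * x by
        simp only [sq, mul_assoc, mul_inv_cancel_left], mul_assoc, hax.eq,
      ← mul_assoc, inv_mul_cancel, one_mul, pow_mul]
  have hw : SemiconjBy (x⁻¹ * a ^ n * x) (x⁻¹ * c * x) (x⁻¹ * c * x)⁻¹ := by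
    simpa only [show x⁻¹ * c⁻¹ * x = (x⁻¹ * c * x)⁻¹ by group] using hca.conj (g := x)
  have huβ : Commute (x⁻¹ * c * x) β := (hxβ.inv_left.mul_left hcβ).mul_left hxβ
  have hwβ : Commute (x⁻¹ * a ^ n * x) β := (hxβ.inv_left.mul_left (haβ.pow_left n)).mul_left hxβ
  have hn2 : n * 2 ≠ 0 := by positivity
  have hun : (x⁻¹ * c * x) ^ n < (β ^ n) ^ 2 := by
    refine SemiconjBy.lt_sq_of_sq_lt (by simpa only [inv_pow] using hw.pow_right n)
      (huβ.pow_pow n n) (hwβ.pow_right n) ?_ ?_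
    · rw [hw_sq, ← pow_mul]
      exact haβ.pow_lt_pow_left (max_lt_iff.mp ha).1 hn2
    · rw [inv_pow, hw_sq, ← inv_pow, ← pow_mul]
      exact haβ.inv_left.pow_lt_pow_left (max_lt_iff.mp ha).2 hn2
  rw [← pow_mul, mul_comm, pow_mul] at hun
  exact (huβ.pow_right 2).lt_of_pow_lt_pow_left n hun

theorem max_conj_inv_lt_sq {a c x β : G} {n : ℕ} (hn : n ≠ 0) (hca : SemiconjBy (a ^ n) c c⁻¹)
    (hax : Commute ((a ^ n) ^ 2) x) (haβ : Commute a β) (hcβ : Commute c β)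
    (hxβ : Commute x β) (ha : max a a⁻¹ < β) :
    max (x⁻¹ * c * x) (x⁻¹ * c * x)⁻¹ < β ^ 2 := by
  refine max_lt (conj_lt_sq hn hca hax haβ hcβ hxβ ha) ?_
  rw [show (x⁻¹ * c * x)⁻¹ = x⁻¹ * c⁻¹ * x by group]
  exact conj_lt_sq hn hca.inv_right hax haβ hcβ.inv_left hxβ ha

end LinearOrder

end Group

theorem stmt_6_general {G : Type*} [Group G] [LinearOrder G]
    [CovariantClass G G (· * ·) (· < ·)]
    (a b c d : G)
    (hab : a * b = b * a) (hbc : b * c = c * b) (hbd : b * d = d * b)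
    (hca : (a ^ 3)⁻¹ * c * a ^ 3 = c⁻¹) (hda : (a ^ 3)⁻¹ * d * a ^ 3 = d⁻¹)
    (hlt : max a a⁻¹ < max b b⁻¹) :
    let E := (d⁻¹ * c * d) * ((d * a)⁻¹ * c * (d * a)) *
      ((d * a ^ 2)⁻¹ * c * (d * a ^ 2)) * ((d * a ^ 3)⁻¹ * c * (d * a ^ 3)) *
      ((d * a ^ 4)⁻¹ * c * (d * a ^ 4)) * ((d * a ^ 5)⁻¹ * c * (d * a ^ 5))
    max E E⁻¹ < max (b ^ 12) (b ^ 12)⁻¹ := by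
  intro E
  set β := max b b⁻¹
  have haβ : Commute a β := Commute.max_inv_right hab
  have hcβ : Commute c β := Commute.max_inv_right (hbc : Commute b c).symm
  have hdβ : Commute d β := Commute.max_inv_right (hbd : Commute b d).symm
  have hca' := semiconjBy_inv_of_conj_eq_inv hca
  have hd := (semiconjBy_inv_of_conj_eq_inv hda).commute_sq
  set l := (List.range 6).map fun k ↦ (d * a ^ k)⁻¹ * c * (d * a ^ k)
  have hbound : ∀ u ∈ l, Commute u β ∧ max u u⁻¹ < β ^ 2 := by
    simp only [l, List.mem_map, List.mem_range]
    rintro _ ⟨k, -, rfl⟩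
    have hxβ : Commute (d * a ^ k) β := hdβ.mul_left (haβ.pow_left k)
    exact ⟨(hxβ.inv_left.mul_left hcβ).mul_left hxβ, max_conj_inv_lt_sq three_ne_zero hca'
      (hd.mul_right ((Commute.pow_pow_self a 3 k).pow_left 2)) haβ hcβ hxβ hlt⟩
  have hE : E = l.prod := by simp [E, l, List.range_succ, mul_assoc]
  calc max E E⁻¹ < (β ^ 2) ^ l.length := hE ▸ l.max_prod_inv_lt_pow_length (by simp [l])
        (fun u hu ↦ (hbound u hu).1.pow_right 2) fun u hu ↦ (hbound u hu).2
    _ = β ^ 12 := by simp [l, ← pow_mul]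
    _ ≤ max (b ^ 12) (b ^ 12)⁻¹ := max_inv_pow_le b 12

theorem stmt_6 {G : Type*} [Group G] [LinearOrder G]
    [CovariantClass G G (· * ·) (· < ·)]
    (a b c d : G) (ha : a ≠ 1) (hb : b ≠ 1) (hc : c ≠ 1) (hd : d ≠ 1)
    (hab : a * b = b * a) (hbc : b * c = c * b) (hbd : b * d = d * b)
    (hca : (a ^ 3)⁻¹ * c * a ^ 3 = c⁻¹) (hda : (a ^ 3)⁻¹ * d * a ^ 3 = d⁻¹)
    (hlt : max a a⁻¹ < max b b⁻¹) :
    let E := (d⁻¹ * c * d) * ((d * a)⁻¹ * c * (d * a)) *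
      ((d * a ^ 2)⁻¹ * c * (d * a ^ 2)) * ((d * a ^ 3)⁻¹ * c * (d * a ^ 3)) *
      ((d * a ^ 4)⁻¹ * c * (d * a ^ 4)) * ((d * a ^ 5)⁻¹ * c * (d * a ^ 5))
    max E E⁻¹ < max (b ^ 12) (b ^ 12)⁻¹ :=
  stmt_6_general a b c d hab hbc hbd hca hda hlt
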